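/- arXiv:2604.15526 — 3 statements merged into one kernel-verified Lean document; each statement's English description precedes it below -/
import Mathlib

section
/- Suppose μ > 0, C := 2θ(1−ϑ)²μ with θ, ϑ ∈ (0,1), γ > 0 satisfies γ ≤ 1/(2(1−ϑ)²μ), and let a ∈ (0,1), γ_prev > 0 satisfy a²/γ_prev > C. Define F(α) := α²/γ − (1−α)·a²/γ_prev − Cα. Then F(0) < 0 and F(1) > 0, so F has a root in (0,1); moreover any root α ∈ (0,1) of F satisfies α²/γ > C, i.e., α > (1−ϑ)√(2θμγ). -/
/-! F(0) = -a²/γp < -C and F(1) = 1/γ - C > 0 because 1/γ ≥ C/θ; the intermediate value theorem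
gives a root. At a root α ∈ (0,1), α²/γ = (1-α)·a²/γp + α·C is a convex combination of a²/γp > C
and C, hence exceeds C, and α² > Cγ = ((1-ϑ)√(2θμγ))². -/

lemma lt_of_eq_sub_mul_sub_mul {α B C y : ℝ} (hα : α < 1) (hB : C < B)
    (h : y - (1 - α) * B - C * α = 0) : C < y := by
  nlinarith [mul_pos (sub_pos.2 hα) (sub_pos.2 hB)]

lemma mul_sqrt_lt_of_sq_mul_lt {s x α : ℝ} (hα : 0 < α) (h : s ^ 2 * x < α ^ 2) :
    s * √x < α :=
  calc s * √x ≤ |s| * √x := mul_le_mul_of_nonneg_right (le_abs_self s) (Real.sqrt_nonneg x)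
    _ = √(s ^ 2 * x) := by rw [Real.sqrt_mul (sq_nonneg s), Real.sqrt_sq_eq_abs]
    _ < α := (Real.sqrt_lt' hα).2 h

theorem stmt_4_general (μ θ ϑ γ γp a : ℝ) (hμ : 0 < μ) (hθ : θ ∈ Set.Ioo (0 : ℝ) 1)
    (hϑ : ϑ ∈ Set.Ioo (0 : ℝ) 1) (hγ : 0 < γ) (hγmax : γ ≤ 1 / (2 * (1 - ϑ) ^ 2 * μ))
    (hap : a ^ 2 / γp > 2 * θ * (1 - ϑ) ^ 2 * μ) :
    (fun α : ℝ => α ^ 2 / γ - (1 - α) * a ^ 2 / γp - (2 * θ * (1 - ϑ) ^ 2 * μ) * α) 0 < 0 ∧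
    0 < (fun α : ℝ => α ^ 2 / γ - (1 - α) * a ^ 2 / γp - (2 * θ * (1 - ϑ) ^ 2 * μ) * α) 1 ∧
    (∃ α ∈ Set.Ioo (0 : ℝ) 1,
      α ^ 2 / γ - (1 - α) * a ^ 2 / γp - (2 * θ * (1 - ϑ) ^ 2 * μ) * α = 0) ∧
    (∀ α ∈ Set.Ioo (0 : ℝ) 1,
      α ^ 2 / γ - (1 - α) * a ^ 2 / γp - (2 * θ * (1 - ϑ) ^ 2 * μ) * α = 0 →
      α ^ 2 / γ > 2 * θ * (1 - ϑ) ^ 2 * μ ∧ α > (1 - ϑ) * Real.sqrt (2 * θ * μ * γ)) := by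
  have hK : 0 < 2 * (1 - ϑ) ^ 2 * μ := by
    have := sub_pos.2 hϑ.2
    positivity
  have hC : 0 < 2 * θ * (1 - ϑ) ^ 2 * μ := by linarith [mul_pos hθ.1 hK]
  have hF0 : 0 ^ 2 / γ - (1 - 0) * a ^ 2 / γp - (2 * θ * (1 - ϑ) ^ 2 * μ) * 0 < 0 :=
    calc _ = -(a ^ 2 / γp) := by ring
      _ < 0 := by linarith
  have hF1 : 0 < 1 ^ 2 / γ - (1 - 1) * a ^ 2 / γp - (2 * θ * (1 - ϑ) ^ 2 * μ) * 1 := by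
    have hKγ : 2 * (1 - ϑ) ^ 2 * μ ≤ 1 / γ := by rwa [le_one_div hK hγ]
    calc 0 < 1 / γ - 2 * θ * (1 - ϑ) ^ 2 * μ := by linarith [mul_lt_mul_of_pos_right hθ.2 hK]
      _ = _ := by ring
  refine ⟨hF0, hF1, intermediate_value_Ioo zero_le_one (by fun_prop) ⟨hF0, hF1⟩, ?_⟩
  rintro α ⟨hα0, hα1⟩ hroot
  rw [mul_div_assoc] at hroot
  have hCα : 2 * θ * (1 - ϑ) ^ 2 * μ < α ^ 2 / γ := lt_of_eq_sub_mul_sub_mul hα1 hap hroot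
  refine ⟨hCα, mul_sqrt_lt_of_sq_mul_lt hα0 ?_⟩
  calc (1 - ϑ) ^ 2 * (2 * θ * μ * γ) = 2 * θ * (1 - ϑ) ^ 2 * μ * γ := by ring
    _ < α ^ 2 := (lt_div_iff₀ hγ).1 hCα

theorem stmt_4 (μ θ ϑ γ γp a : ℝ) (hμ : 0 < μ) (hθ : θ ∈ Set.Ioo (0 : ℝ) 1)
    (hϑ : ϑ ∈ Set.Ioo (0 : ℝ) 1) (hγ : 0 < γ) (hγmax : γ ≤ 1 / (2 * (1 - ϑ) ^ 2 * μ))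
    (hγp : 0 < γp) (ha : a ∈ Set.Ioo (0 : ℝ) 1)
    (hap : a ^ 2 / γp > 2 * θ * (1 - ϑ) ^ 2 * μ) :
    (fun α : ℝ => α ^ 2 / γ - (1 - α) * a ^ 2 / γp - (2 * θ * (1 - ϑ) ^ 2 * μ) * α) 0 < 0 ∧
    0 < (fun α : ℝ => α ^ 2 / γ - (1 - α) * a ^ 2 / γp - (2 * θ * (1 - ϑ) ^ 2 * μ) * α) 1 ∧
    (∃ α ∈ Set.Ioo (0 : ℝ) 1,
      α ^ 2 / γ - (1 - α) * a ^ 2 / γp - (2 * θ * (1 - ϑ) ^ 2 * μ) * α = 0) ∧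
    (∀ α ∈ Set.Ioo (0 : ℝ) 1,
      α ^ 2 / γ - (1 - α) * a ^ 2 / γp - (2 * θ * (1 - ϑ) ^ 2 * μ) * α = 0 →
      α ^ 2 / γ > 2 * θ * (1 - ϑ) ^ 2 * μ ∧ α > (1 - ϑ) * Real.sqrt (2 * θ * μ * γ)) :=
  stmt_4_general μ θ ϑ γ γp a hμ hθ hϑ hγ hγmax hap
end

section
/- Let (α_i)_{i=0}^{t} ⊂ (0,1), (γ_i)_{i=0}^{t} ⊂ (0,∞), and (Θ_i)_{i=1}^{t} ∈ {0,1}, such that whenever Θ_i = 1 we have α_i²/γ_i = (1−α_i)·α_{i−1}²/γ_{i−1}, and whenever Θ_i = 0 we have (α_i, γ_i) = (α_{i−1}, γ_{i−1}). Set λ_t := ∏_{i=1}^t (1 − Θ_i α_i). Then (1 + (α_0/√γ_0)·Σ_{i=1}^t Θ_i √γ_i)^{−2} ≤ λ_t ≤ (1 + (α_0/(2√γ_0))·Σ_{i=1}^t Θ_i √γ_i)^{−2}. -/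
/-!
Put `q i := √γᵢ / αᵢ`. An accepted step gives `q (i-1)² = (1 - αᵢ) q i²` and a rejected one
`q (i-1) = q i`, so `λₜ = (q 0 / q t)²` telescopically. Since `a/2 ≤ 1 - √(1 - a) ≤ a`, the
increment `q i - q (i-1) = q i (1 - √(1 - αᵢ))` lies between `Θᵢ √γᵢ / 2` and `Θᵢ √γᵢ`
(as `αᵢ q i = √γᵢ`). Summing, and using `1 / q 0 = α₀ / √γ₀`, `q t / q 0` lies between the two
bases of the claimed bounds.
-/

open Finset

theorem Finset.prod_Icc_one_mul_eq_of_mul_eq_pred {M : Type*} [CommMonoid M] {a p : ℕ → M} {n : ℕ}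
    (h : ∀ i ∈ Icc 1 n, a i * p i = p (i - 1)) : (∏ i ∈ Icc 1 n, a i) * p n = p 0 := by
  induction n with
  | zero => simp
  | succ n ih =>
    rw [prod_Icc_succ_top (by omega), mul_assoc, h (n + 1) (by simp), Nat.add_sub_cancel]
    exact ih fun i hi => h i (Icc_subset_Icc_right n.le_succ hi)

theorem Finset.sum_Icc_one_sub_pred {G : Type*} [AddCommGroup G] (f : ℕ → G) (n : ℕ) :
    ∑ i ∈ Icc 1 n, (f i - f (i - 1)) = f n - f 0 := by
  induction n with
  | zero => simp
  | succ n ih => rw [sum_Icc_succ_top (by omega), ih, Nat.add_sub_cancel, sub_add_sub_cancel']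

section OrderedField

variable {K : Type*} [Field K] [LinearOrder K] [IsStrictOrderedRing K]

theorem zpow_le_zpow_left_of_nonpos₀ {n : ℤ} {x y : K} (hn : n ≤ 0) (hx : 0 < x) (h : x ≤ y) :
    y ^ n ≤ x ^ n := by
  obtain ⟨m, rfl⟩ := Int.exists_eq_neg_ofNat hn
  simp only [zpow_neg, zpow_natCast]
  exact inv_anti₀ (pow_pos hx m) (pow_le_pow_left₀ hx.le h m)

theorem half_mul_le_sub_and_sub_le_mul_of_sq_eq {a q q' : K} (ha₀ : 0 ≤ a) (ha₁ : a ≤ 1)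
    (hq : 0 ≤ q) (hq' : 0 ≤ q') (h : q' ^ 2 = (1 - a) * q ^ 2) :
    a * q / 2 ≤ q - q' ∧ q - q' ≤ a * q := by
  have upper : q' ≤ (1 - a / 2) * q :=
    le_of_pow_le_pow_left₀ two_ne_zero (by nlinarith) (by nlinarith [sq_nonneg (a * q)])
  have lower : (1 - a) * q ≤ q' :=
    le_of_pow_le_pow_left₀ two_ne_zero hq' (by nlinarith)
  constructor <;> linarith

end OrderedField

theorem sq_sqrt_div_eq_one_sub_mul_sq_sqrt_div {a a' g g' : ℝ} (ha : a ∈ Set.Ioo 0 1)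
    (ha' : 0 < a') (hg : 0 < g) (hg' : 0 < g') (h : a ^ 2 / g = (1 - a) * a' ^ 2 / g') :
    (√g' / a') ^ 2 = (1 - a) * (√g / a) ^ 2 := by
  rw [div_pow, div_pow, Real.sq_sqrt hg.le, Real.sq_sqrt hg'.le]
  rw [div_eq_div_iff hg.ne' hg'.ne'] at h
  field_simp [ha.1.ne']
  linear_combination h

theorem one_sub_mul_sq_sqrt_div_eq_and_sub_bounds {θ a a' g g' : ℝ} (ha : a ∈ Set.Ioo 0 1)
    (ha' : 0 < a') (hg : 0 < g) (hg' : 0 < g') (hθ : θ = 0 ∨ θ = 1)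
    (hrec : θ = 1 → a ^ 2 / g = (1 - a) * a' ^ 2 / g') (hcarry : θ = 0 → a = a' ∧ g = g') :
    (1 - θ * a) * (√g / a) ^ 2 = (√g' / a') ^ 2 ∧
      θ * √g / 2 ≤ √g / a - √g' / a' ∧ √g / a - √g' / a' ≤ θ * √g := by
  rcases hθ with rfl | rfl
  · obtain ⟨rfl, rfl⟩ := hcarry rfl
    simp
  · have hsq := sq_sqrt_div_eq_one_sub_mul_sq_sqrt_div ha ha' hg hg' (hrec rfl)
    have hmul : a * (√g / a) = √g := mul_div_cancel₀ _ ha.1.ne'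
    have hbounds := half_mul_le_sub_and_sub_le_mul_of_sq_eq ha.1.le ha.2.le
      (div_nonneg (Real.sqrt_nonneg g) ha.1.le) (div_nonneg (Real.sqrt_nonneg g') ha'.le) hsq
    rw [hmul] at hbounds
    simpa only [one_mul, hsq, true_and] using hbounds

theorem stmt_7_general (t : ℕ) (α γ Θ : ℕ → ℝ)
    (hα : ∀ i ≤ t, α i ∈ Set.Ioo (0 : ℝ) 1) (hγ : ∀ i ≤ t, 0 < γ i)
    (hΘ : ∀ i, 1 ≤ i → i ≤ t → Θ i = 0 ∨ Θ i = 1)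
    (hrec : ∀ i, 1 ≤ i → i ≤ t → Θ i = 1 →
      (α i) ^ 2 / γ i = (1 - α i) * (α (i - 1)) ^ 2 / γ (i - 1))
    (hcarry : ∀ i, 1 ≤ i → i ≤ t → Θ i = 0 → α i = α (i - 1) ∧ γ i = γ (i - 1)) :
    (1 + (α 0 / Real.sqrt (γ 0)) * ∑ i ∈ Finset.Icc 1 t, Θ i * Real.sqrt (γ i)) ^ (-(2 : ℤ))
      ≤ ∏ i ∈ Finset.Icc 1 t, (1 - Θ i * α i) ∧
    ∏ i ∈ Finset.Icc 1 t, (1 - Θ i * α i)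
      ≤ (1 + (α 0 / (2 * Real.sqrt (γ 0))) *
          ∑ i ∈ Finset.Icc 1 t, Θ i * Real.sqrt (γ i)) ^ (-(2 : ℤ)) := by
  set q : ℕ → ℝ := fun i => √(γ i) / α i
  set S := ∑ i ∈ Icc 1 t, Θ i * √(γ i)
  have hq : ∀ i ≤ t, 0 < q i := fun i hi => div_pos (Real.sqrt_pos.2 (hγ i hi)) (hα i hi).1
  have step : ∀ i ∈ Icc 1 t, (1 - Θ i * α i) * q i ^ 2 = q (i - 1) ^ 2 ∧
      Θ i * √(γ i) / 2 ≤ q i - q (i - 1) ∧ q i - q (i - 1) ≤ Θ i * √(γ i) := by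
    intro i hi
    obtain ⟨hi₁, hit⟩ := mem_Icc.1 hi
    exact one_sub_mul_sq_sqrt_div_eq_and_sub_bounds (hα i hit) (hα (i - 1) (by omega)).1
      (hγ i hit) (hγ (i - 1) (by omega)) (hΘ i hi₁ hit) (hrec i hi₁ hit) (hcarry i hi₁ hit)
  have hprod := prod_Icc_one_mul_eq_of_mul_eq_pred (p := fun i => q i ^ 2) fun i hi => (step i hi).1
  have hlower : S / 2 ≤ q t - q 0 := by
    rw [← sum_Icc_one_sub_pred, sum_div]
    exact sum_le_sum fun i hi => (step i hi).2.1
  have hupper : q t - q 0 ≤ S := by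
    rw [← sum_Icc_one_sub_pred]
    exact sum_le_sum fun i hi => (step i hi).2.2
  have hq₀ := hq 0 t.zero_le
  have hqt := hq t le_rfl
  have hrate : ∏ i ∈ Icc 1 t, (1 - Θ i * α i) = (q t / q 0) ^ (-2 : ℤ) := by
    rw [zpow_neg, zpow_ofNat, ← inv_pow, inv_div, div_pow, eq_div_iff (by positivity)]
    exact hprod
  have hc : α 0 / √(γ 0) = (q 0)⁻¹ := by simp only [q, inv_div]
  have hc₂ : α 0 / (2 * √(γ 0)) = (q 0)⁻¹ / 2 := by rw [mul_comm, ← div_div, hc]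
  rw [hrate, hc, hc₂]
  constructor
  · apply zpow_le_zpow_left_of_nonpos₀ (by norm_num) (by positivity)
    rw [div_le_iff₀ hq₀]
    field_simp
    linarith
  · apply zpow_le_zpow_left_of_nonpos₀ (by norm_num) (by nlinarith [inv_pos.2 hq₀])
    rw [le_div_iff₀ hq₀]
    field_simp
    linarith

theorem stmt_7 (t : ℕ) (ht : 0 < t) (α γ Θ : ℕ → ℝ)
    (hα : ∀ i ≤ t, α i ∈ Set.Ioo (0 : ℝ) 1) (hγ : ∀ i ≤ t, 0 < γ i)
    (hΘ : ∀ i, 1 ≤ i → i ≤ t → Θ i = 0 ∨ Θ i = 1)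
    (hrec : ∀ i, 1 ≤ i → i ≤ t → Θ i = 1 →
      (α i) ^ 2 / γ i = (1 - α i) * (α (i - 1)) ^ 2 / γ (i - 1))
    (hcarry : ∀ i, 1 ≤ i → i ≤ t → Θ i = 0 → α i = α (i - 1) ∧ γ i = γ (i - 1)) :
    (1 + (α 0 / Real.sqrt (γ 0)) * ∑ i ∈ Finset.Icc 1 t, Θ i * Real.sqrt (γ i)) ^ (-(2 : ℤ))
      ≤ ∏ i ∈ Finset.Icc 1 t, (1 - Θ i * α i) ∧
    ∏ i ∈ Finset.Icc 1 t, (1 - Θ i * α i)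
      ≤ (1 + (α 0 / (2 * Real.sqrt (γ 0))) *
          ∑ i ∈ Finset.Icc 1 t, Θ i * Real.sqrt (γ i)) ^ (-(2 : ℤ)) :=
  stmt_7_general t α γ Θ hα hγ hΘ hrec hcarry
end

section
/- Let φ: ℝᵈ → ℝ be L-smooth (i.e., φ(z) ≤ φ(y) + ⟪∇φ(y), z − y⟫ + (L/2)‖z − y‖² for all y, z), let θ ∈ (0,1), ϑ ∈ [0,1), let G ∈ ℝᵈ satisfy ‖G − ∇φ(y)‖ ≤ ϑ‖∇φ(y)‖, and let 0 < γ ≤ 2(1 − 2ϑ − θ(1−ϑ))/(L(1−ϑ)) with 1 − 2ϑ − θ(1−ϑ) > 0. Then φ(y − γG) ≤ φ(y) − θγ‖G‖². -/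
/-!
Smoothness gives `φ (y - γ • G) ≤ φ y - γ ⟪∇φ(y), G⟫ + (L/2) γ² ‖G‖²`. The relative error bound
makes `G` a descent direction with `(1 - ϑ) ⟪∇φ(y), G⟫ ≥ (1 - 2ϑ) ‖G‖²`, since
`⟪∇φ(y), G⟫ = ‖G‖² - ⟪G - ∇φ(y), G⟫` and `(1 - ϑ) ‖∇φ(y)‖ ≤ ‖G‖`. The step size bound is exactly what
lets the linear decrease `(1 - 2ϑ)/(1 - ϑ) γ ‖G‖²` pay for the quadratic term and leave `θ γ ‖G‖²`.
-/

open RealInnerProductSpace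

lemma one_sub_mul_norm_le_of_norm_sub_le {E : Type*} [SeminormedAddGroup E] {v G : E} {ϑ : ℝ}
    (hG : ‖G - v‖ ≤ ϑ * ‖v‖) :
    (1 - ϑ) * ‖v‖ ≤ ‖G‖ := by
  linarith [norm_le_norm_add_norm_sub G v]

lemma mul_norm_sq_le_mul_inner_of_norm_sub_le {E : Type*} [NormedAddCommGroup E]
    [InnerProductSpace ℝ E] {v G : E} {ϑ : ℝ} (hϑ0 : 0 ≤ ϑ) (hϑ1 : ϑ ≤ 1)
    (hG : ‖G - v‖ ≤ ϑ * ‖v‖) :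
    (1 - 2 * ϑ) * ‖G‖ ^ 2 ≤ (1 - ϑ) * ⟪v, G⟫ := by
  have hsplit : ⟪v, G⟫ = ‖G‖ ^ 2 - ⟪G - v, G⟫ := by
    rw [inner_sub_left, real_inner_self_eq_norm_sq]; ring
  have herr : ⟪G - v, G⟫ ≤ ϑ * ‖v‖ * ‖G‖ :=
    (real_inner_le_norm _ _).trans (mul_le_mul_of_nonneg_right hG (norm_nonneg G))
  have hv : ϑ * ‖G‖ * ((1 - ϑ) * ‖v‖) ≤ ϑ * ‖G‖ * ‖G‖ :=
    mul_le_mul_of_nonneg_left (one_sub_mul_norm_le_of_norm_sub_le hG) (by positivity)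
  nlinarith [mul_le_mul_of_nonneg_left herr (sub_nonneg.mpr hϑ1)]

lemma apply_sub_smul_le_of_le_quadratic {E : Type*} [NormedAddCommGroup E]
    [InnerProductSpace ℝ E] {φ : E → ℝ} {y g : E} {L : ℝ}
    (hsmooth : ∀ z : E, φ z ≤ φ y + ⟪g, z - y⟫ + (L / 2) * ‖z - y‖ ^ 2) (γ : ℝ) (G : E) :
    φ (y - γ • G) ≤ φ y - γ * ⟪g, G⟫ + (L / 2) * γ ^ 2 * ‖G‖ ^ 2 := by
  have h := hsmooth (y - γ • G)
  rw [sub_sub_cancel_left, inner_neg_right, real_inner_smul_right, norm_neg, norm_smul,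
    mul_pow, Real.norm_eq_abs, sq_abs, ← sub_eq_add_neg] at h
  rwa [mul_assoc (L / 2)]

theorem stmt_14_general {E : Type*} [NormedAddCommGroup E] [InnerProductSpace ℝ E]
    (φ : E → ℝ) (g : E → E) (L : ℝ) (hL : 0 < L)
    (hsmooth : ∀ y z : E, φ z ≤ φ y + ⟪g y, z - y⟫ + (L / 2) * ‖z - y‖ ^ 2)
    (θ ϑ : ℝ) (hϑ0 : 0 ≤ ϑ) (hϑ1 : ϑ < 1)
    (y G : E) (hG : ‖G - g y‖ ≤ ϑ * ‖g y‖)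
    (γ : ℝ) (hγ0 : 0 < γ) (hγ : γ ≤ 2 * (1 - 2 * ϑ - θ * (1 - ϑ)) / (L * (1 - ϑ))) :
    φ (y - γ • G) ≤ φ y - θ * γ * ‖G‖ ^ 2 := by
  have hϑ : 0 < 1 - ϑ := sub_pos.mpr hϑ1
  have hdescent := apply_sub_smul_le_of_le_quadratic (hsmooth y) γ G
  have hinner := mul_norm_sq_le_mul_inner_of_norm_sub_le hϑ0 hϑ1.le hG
  have hstep : γ * (L * (1 - ϑ)) ≤ 2 * (1 - 2 * ϑ - θ * (1 - ϑ)) :=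
    (le_div_iff₀ (mul_pos hL hϑ)).mp hγ
  suffices h : (1 - ϑ) * (θ * γ * ‖G‖ ^ 2 + (L / 2) * γ ^ 2 * ‖G‖ ^ 2) ≤
      (1 - ϑ) * (γ * ⟪g y, G⟫) by
    linarith [le_of_mul_le_mul_left h hϑ]
  calc (1 - ϑ) * (θ * γ * ‖G‖ ^ 2 + (L / 2) * γ ^ 2 * ‖G‖ ^ 2)
      = γ * ‖G‖ ^ 2 * (θ * (1 - ϑ) + γ * (L * (1 - ϑ)) / 2) := by ring
    _ ≤ γ * ‖G‖ ^ 2 * (1 - 2 * ϑ) := by gcongr; linarith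
    _ = γ * ((1 - 2 * ϑ) * ‖G‖ ^ 2) := by ring
    _ ≤ γ * ((1 - ϑ) * ⟪g y, G⟫) := by gcongr
    _ = (1 - ϑ) * (γ * ⟪g y, G⟫) := by ring

theorem stmt_14 {E : Type*} [NormedAddCommGroup E] [InnerProductSpace ℝ E]
    (φ : E → ℝ) (g : E → E) (L : ℝ) (hL : 0 < L)
    (hsmooth : ∀ y z : E, φ z ≤ φ y + ⟪g y, z - y⟫ + (L / 2) * ‖z - y‖ ^ 2)
    (θ ϑ : ℝ) (hθ : θ ∈ Set.Ioo (0 : ℝ) 1) (hϑ0 : 0 ≤ ϑ) (hϑ1 : ϑ < 1)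
    (hpos : 0 < 1 - 2 * ϑ - θ * (1 - ϑ))
    (y G : E) (hG : ‖G - g y‖ ≤ ϑ * ‖g y‖)
    (γ : ℝ) (hγ0 : 0 < γ) (hγ : γ ≤ 2 * (1 - 2 * ϑ - θ * (1 - ϑ)) / (L * (1 - ϑ))) :
    φ (y - γ • G) ≤ φ y - θ * γ * ‖G‖ ^ 2 :=
  stmt_14_general φ g L hL hsmooth θ ϑ hϑ0 hϑ1 y G hG γ hγ0 hγ
end
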